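/- Let Λ be a free abelian group of finite rank ρ, let V be a complex vector space, and let ι : Λ → V be a group homomorphism whose image spans V over ℂ. If T : V → V is a ℂ-linear automorphism of finite order with T(ι(Λ)) = ι(Λ) and ι is injective, then the order of T divides the order of the induced automorphism of Λ, which is the order of a finite-order element of GL_ρ(ℤ); in particular if ρ ≤ 6 then T has order at most 30. -/

import Mathlib

/-!
`T` restricts to an automorphism `σ` of `Λ` because `ι` is injective, and `T ^ k = 1` exactly when
`k • σ = 0` because `ι Λ` spans `V`; so `T` has the order of every such `σ`. In a basis, `σ` is an
integral matrix `A` of size `ρ`. If `A ^ n = 1`, the minimal polynomial of `A` over `ℚ` divides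
`X ^ n - 1`, hence is a product of distinct cyclotomic polynomials `Φ_d` with `∑ φ(d) ≤ ρ`, and the
order of `A` is the lcm of these `d`. For `ρ ≤ 6` every such `d` divides `2520` (a prime power `q`
has `q ≤ 2 φ(q)`), which leaves thirteen candidates, and checking their subsets bounds the lcm
by `30`.
-/

open Polynomial Function

theorem Nat.le_two_mul_totient_of_isPrimePow {q : ℕ} (hq : IsPrimePow q) : q ≤ 2 * q.totient := by
  obtain ⟨p, k, hp, hk, rfl⟩ := (isPrimePow_nat_iff q).1 hq
  obtain ⟨k, rfl⟩ := Nat.exists_eq_add_of_lt hk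
  rw [zero_add, Nat.totient_prime_pow_succ hp, pow_succ]
  have hp2 := hp.two_le
  calc p ^ k * p ≤ p ^ k * (2 * (p - 1)) := Nat.mul_le_mul_left _ (by omega)
    _ = 2 * (p ^ k * (p - 1)) := by ring

theorem Nat.dvd_2520_of_totient_le_six {d : ℕ} (hd : d ≠ 0) (h : d.totient ≤ 6) : d ∣ 2520 := by
  refine (Nat.dvd_iff_prime_pow_dvd_dvd 2520 d).2 fun p k hp hpk => ?_
  rcases Nat.eq_zero_or_pos k with rfl | hk
  · exact one_dvd _
  have hφ : (p ^ k).totient ≤ 6 :=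
    (Nat.le_of_dvd (Nat.totient_pos.2 (Nat.pos_of_ne_zero hd)) (Nat.totient_dvd_of_dvd hpk)).trans h
  have hle := Nat.le_two_mul_totient_of_isPrimePow ((isPrimePow_nat_iff _).2 ⟨p, k, hp, hk, rfl⟩)
  have hsmall : ∀ q < 13, 0 < q → q.totient ≤ 6 → q ∣ 2520 := by decide
  exact hsmall _ (by omega) (pow_pos hp.pos k) hφ

theorem Nat.mem_of_totient_le_six {d : ℕ} (hd : d ≠ 0) (h : d.totient ≤ 6) :
    d ∈ ({1, 2, 3, 4, 5, 6, 7, 8, 9, 10, 12, 14, 18} : Finset ℕ) := by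
  have hdiv : ∀ d ∈ Nat.divisors 2520, d.totient ≤ 6 →
      d ∈ ({1, 2, 3, 4, 5, 6, 7, 8, 9, 10, 12, 14, 18} : Finset ℕ) := by
    decide +kernel
  exact hdiv d (Nat.mem_divisors.2 ⟨Nat.dvd_2520_of_totient_le_six hd h, by norm_num⟩) h

set_option maxRecDepth 10000 in
theorem Finset.lcm_le_thirty_of_sum_totient_le_six {S : Finset ℕ} (h0 : 0 ∉ S)
    (h : ∑ d ∈ S, d.totient ≤ 6) : S.lcm id ≤ 30 := by
  have hsubsets : ∀ S ∈ ({1, 2, 3, 4, 5, 6, 7, 8, 9, 10, 12, 14, 18} : Finset ℕ).powerset,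
      ∑ d ∈ S, d.totient ≤ 6 → S.lcm id ≤ 30 := by
    decide +kernel
  refine hsubsets S (Finset.mem_powerset.2 fun d hd =>
    Nat.mem_of_totient_le_six (ne_of_mem_of_not_mem hd h0) ?_) h
  exact (Finset.single_le_sum (fun _ _ => Nat.zero_le _) hd).trans h

theorem Polynomial.exists_associated_prod_cyclotomic_of_dvd_X_pow_sub_one {p : ℚ[X]} {n : ℕ}
    (hn : 0 < n) (hp : p ∣ X ^ n - 1) :
    ∃ S ⊆ n.divisors, Associated p (∏ d ∈ S, cyclotomic d ℚ) := by
  classical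
  let S := n.divisors.filter (fun d => cyclotomic d ℚ ∣ p)
  refine ⟨S, Finset.filter_subset _ _, associated_of_dvd_dvd ?_ ?_⟩
  · have hcop : IsCoprime p (∏ d ∈ n.divisors.filter (fun d => ¬ cyclotomic d ℚ ∣ p),
        cyclotomic d ℚ) := by
      refine IsCoprime.prod_right fun d hd => ?_
      rw [Finset.mem_filter, Nat.mem_divisors] at hd
      exact ((cyclotomic.irreducible_rat (Nat.pos_of_dvd_of_pos hd.1.1 hn)).coprime_iff_not_dvd.2
        hd.2).symm
    rw [← prod_cyclotomic_eq_X_pow_sub_one hn, ← Finset.prod_filter_mul_prod_filter_not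
      n.divisors (fun d => cyclotomic d ℚ ∣ p)] at hp
    exact hcop.dvd_of_dvd_mul_right hp
  · exact Finset.prod_dvd_of_coprime (fun _ _ _ _ h => cyclotomic.isCoprime_rat h)
      fun d hd => (Finset.mem_filter.1 hd).2

theorem Matrix.exists_sum_totient_le_card_and_orderOf_eq_lcm {ι : Type*} [Fintype ι]
    [DecidableEq ι] {A : Matrix ι ι ℚ} (hA : IsOfFinOrder A) :
    ∃ S : Finset ℕ, 0 ∉ S ∧ ∑ d ∈ S, d.totient ≤ Fintype.card ι ∧ orderOf A = S.lcm id := by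
  have hμ : minpoly ℚ A ∣ X ^ orderOf A - 1 := minpoly.dvd _ _ (by simp [pow_orderOf_eq_one])
  obtain ⟨S, hSn, hassoc⟩ :=
    exists_associated_prod_cyclotomic_of_dvd_X_pow_sub_one hA.orderOf_pos hμ
  have h0 : 0 ∉ S := fun h => by simpa using hSn h
  refine ⟨S, h0, ?_, Nat.dvd_antisymm (orderOf_dvd_of_pow_eq_one ?_)
    (Finset.lcm_dvd fun d hd => Nat.dvd_of_mem_divisors (hSn hd))⟩
  · calc ∑ d ∈ S, d.totient = (∏ d ∈ S, cyclotomic d ℚ).natDegree := by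
          rw [natDegree_prod _ _ fun d _ => cyclotomic_ne_zero d ℚ]
          simp only [natDegree_cyclotomic]
      _ = (minpoly ℚ A).natDegree :=
          (natDegree_eq_of_degree_eq (degree_eq_degree_of_associated hassoc)).symm
      _ ≤ A.charpoly.natDegree :=
          natDegree_le_of_dvd A.minpoly_dvd_charpoly A.charpoly_monic.ne_zero
      _ = Fintype.card ι := A.charpoly_natDegree_eq_dim
  · have hL : 0 < S.lcm id :=
      Nat.pos_of_ne_zero fun h => h0 (by simpa using Finset.lcm_eq_zero_iff.1 h)
    have hdvd : minpoly ℚ A ∣ X ^ S.lcm id - 1 := by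
      refine hassoc.dvd.trans ?_
      rw [← prod_cyclotomic_eq_X_pow_sub_one hL]
      exact Finset.prod_dvd_prod_of_subset _ _ _ fun d hd =>
        Nat.mem_divisors.2 ⟨Finset.dvd_lcm hd, hL.ne'⟩
    simpa [sub_eq_zero] using aeval_eq_zero_of_dvd_aeval_eq_zero hdvd (minpoly.aeval ℚ A)

theorem Matrix.orderOf_le_thirty {ι : Type*} [Fintype ι] [DecidableEq ι]
    (hι : Fintype.card ι ≤ 6) (A : Matrix ι ι ℚ) : orderOf A ≤ 30 := by
  by_cases hA : IsOfFinOrder A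
  · obtain ⟨S, h0, hsum, hord⟩ := exists_sum_totient_le_card_and_orderOf_eq_lcm hA
    exact hord ▸ Finset.lcm_le_thirty_of_sum_totient_le_six h0 (hsum.trans hι)
  · simp [orderOf_eq_zero hA]

section IntegralMatrix

variable {Λ ι : Type*} [AddCommGroup Λ] [Fintype ι] [DecidableEq ι]

noncomputable def AddAut.toRatMatrix (b : Module.Basis ι ℤ Λ) :
    Multiplicative (AddAut Λ) →* Matrix ι ι ℚ :=
  (Int.castRingHom ℚ).mapMatrix.toMonoidHom.comp <|
    (LinearMap.toMatrixAlgEquiv b).toMonoidHom.comp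
      { toFun := fun σ => (σ.toAdd : Λ →+ Λ).toIntLinearMap
        map_one' := rfl
        map_mul' := fun _ _ => rfl }

theorem AddAut.toRatMatrix_injective (b : Module.Basis ι ℤ Λ) :
    Injective (AddAut.toRatMatrix b) := by
  intro σ τ h
  have h1 := (LinearMap.toMatrixAlgEquiv b).injective (Matrix.map_injective Int.cast_injective h)
  exact Multiplicative.toAdd.injective (AddEquiv.ext (LinearMap.congr_fun h1))

theorem AddAut.addOrderOf_le_thirty (b : Module.Basis ι ℤ Λ) (hι : Fintype.card ι ≤ 6)
    (σ : AddAut Λ) : addOrderOf σ ≤ 30 := by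
  rw [← orderOf_ofAdd_eq_addOrderOf, ← orderOf_injective _ (toRatMatrix_injective b)]
  exact Matrix.orderOf_le_thirty hι _

end IntegralMatrix

section LatticeAutomorphism

variable {Λ V : Type*} [AddCommGroup Λ] [AddCommGroup V]

theorem AddAut.coe_nsmul (σ : AddAut Λ) (k : ℕ) : ⇑(k • σ) = σ^[k] := by
  induction k with
  | zero => rfl
  | succ k ih => rw [succ_nsmul, AddAut.coe_add, ih, iterate_succ]

theorem exists_addAut_semiconj {ι : Λ →+ V} (hinj : Injective ι) (T : V ≃+ V)
    (hT : T '' Set.range ι = Set.range ι) : ∃ σ : AddAut Λ, Semiconj ι σ T := by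
  have hmap : ι.range.map (T : V →+ V) = ι.range := SetLike.coe_injective (by simpa using hT)
  let e := AddMonoidHom.ofInjective hinj
  refine ⟨e.trans <| (T.addSubgroupMap ι.range).trans <|
    (AddEquiv.addSubgroupCongr hmap).trans e.symm, fun x => ?_⟩
  simp [e, AddMonoidHom.ofInjective_apply]

variable {R : Type*} [Semiring R] [Module R V]

theorem orderOf_eq_addOrderOf_of_semiconj {ι : Λ →+ V} (hinj : Injective ι)
    (hspan : Submodule.span R (Set.range ι) = ⊤) {T : V ≃ₗ[R] V} {σ : AddAut Λ}
    (h : Semiconj ι σ T) : orderOf T = addOrderOf σ := by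
  rw [← orderOf_ofAdd_eq_addOrderOf, orderOf_eq_orderOf_iff]
  intro k
  have hk : Semiconj ι ⇑(k • σ) ⇑(T ^ k) := by
    rw [AddAut.coe_nsmul, LinearEquiv.coe_pow]
    exact h.iterate_right k
  calc (T ^ k : V ≃ₗ[R] V) = 1 ↔ ∀ x, (T ^ k : V ≃ₗ[R] V) (ι x) = ι x := by
        refine ⟨fun h x => by simp [h], fun h => ?_⟩
        exact LinearEquiv.toLinearMap_injective (LinearMap.ext_on_range hspan h)
    _ ↔ ∀ x, (k • σ) x = x := by simp only [← hk _, hinj.eq_iff]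
    _ ↔ Multiplicative.ofAdd σ ^ k = 1 := by
        rw [← ofAdd_nsmul, ofAdd_eq_one, AddEquiv.ext_iff]; rfl

end LatticeAutomorphism

theorem order_le_30_of_preserves_lattice_general
    {Λ : Type*} [AddCommGroup Λ] {ρ : ℕ} (bΛ : Module.Basis (Fin ρ) ℤ Λ)
    {V : Type*} [AddCommGroup V] [Module ℂ V]
    (ι : Λ →+ V) (hinj : Function.Injective ι)
    (hspan : Submodule.span ℂ (Set.range ι) = ⊤)
    (T : V ≃ₗ[ℂ] V)
    (hTΛ : (T : V → V) '' Set.range ι = Set.range ι) :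
    (∀ σ : AddAut Λ, (∀ x : Λ, ι (σ x) = T (ι x)) → orderOf T ∣ addOrderOf σ) ∧
      (ρ ≤ 6 → orderOf T ≤ 30) := by
  refine ⟨fun σ hσ => (orderOf_eq_addOrderOf_of_semiconj hinj hspan hσ).dvd, fun hρ => ?_⟩
  obtain ⟨σ, hσ⟩ := exists_addAut_semiconj hinj T.toAddEquiv hTΛ
  rw [orderOf_eq_addOrderOf_of_semiconj hinj hspan hσ]
  exact AddAut.addOrderOf_le_thirty bΛ (by simpa using hρ) σ

/-- Let `Λ` be a free abelian group of finite rank `ρ`, `V` a complex vector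
space, and `ι : Λ → V` an injective group homomorphism whose image spans `V` over `ℂ`.  If
`T : V ≃ V` is a `ℂ`-linear automorphism of finite order with `T (ι Λ) = ι Λ`, then the order
of `T` divides the order of any induced automorphism of `Λ` (a finite-order element of
`GL_ρ(ℤ)`); in particular, if `ρ ≤ 6` then `T` has order at most `30`. -/
theorem order_le_30_of_preserves_lattice
    {Λ : Type*} [AddCommGroup Λ] {ρ : ℕ} (bΛ : Module.Basis (Fin ρ) ℤ Λ)
    {V : Type*} [AddCommGroup V] [Module ℂ V]
    (ι : Λ →+ V) (hinj : Function.Injective ι)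
    (hspan : Submodule.span ℂ (Set.range ι) = ⊤)
    (T : V ≃ₗ[ℂ] V) (hT : IsOfFinOrder T)
    (hTΛ : (T : V → V) '' Set.range ι = Set.range ι) :
    (∀ σ : AddAut Λ, (∀ x : Λ, ι (σ x) = T (ι x)) → orderOf T ∣ addOrderOf σ) ∧
      (ρ ≤ 6 → orderOf T ≤ 30) :=
  order_le_30_of_preserves_lattice_general bΛ ι hinj hspan T hTΛ
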